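/- arXiv:1102.0036 — 3 statements merged into one kernel-verified Lean document; each statement's English description precedes it below -/
import Mathlib

section
/- For every L(λ) ∈ T_λ, every x(λ) ∈ ⊕_{i<0} g̃_i, every y(λ) ∈ ⊕_{i≥|β|+1} g̃_i, and every w(λ) ∈ g̃, one has ⟨L(λ), [y(λ), w(λ)₊] − [x(λ), w(λ)₋]⟩_λ = 0, where w(λ)₊ and w(λ)₋ denote the projections of w(λ) onto g̃₊ = ⊕_{i≥0} g̃_i and g̃₋ = ⊕_{i<0} g̃_i respectively. (This is the key computation showing that the ideal of polynomial functions vanishing on T_λ is a Poisson ideal for the R-matrix bracket, so that T_λ inherits a Poisson structure.) -/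
/-! A coefficientwise degree count. `L` has loop degree in `[-N, 1]`, while `[y, w₊]` has
degree `≥ N + 1` and `[x, w₋]` has degree `≤ -2`, because the loop bracket adds degrees.
The form `⟨·,·⟩_λ` pairs `g̃ᵢ` only with `g̃₋ᵢ` (the Killing form pairs `𝔤ₖ` only with `𝔤₋ₖ`),
and no degree in `[-N, 1]` is the negative of one in `[N + 1, ∞) ∪ (-∞, -2]`. -/

namespace PeriodicFullKostantToda

variable {g : Type} [LieRing g] [LieAlgebra ℂ g]

/-- The Lie bracket of the loop algebra `g̃ = 𝔤 ⊗ ℂ[λ,λ⁻¹]`, modelled on `ℤ →₀ 𝔤`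
(`x k` is the coefficient of `λ^k`). -/
noncomputable def loopBracket (x y : ℤ →₀ g) : ℤ →₀ g :=
  x.sum fun i xi => y.sum fun j yj => Finsupp.single (i + j) ⁅xi, yj⁆

/-- The degree-`i` component `g̃ᵢ` of the loop algebra, for the grading in which `λ^k e_α`
has degree `|α| + (N+1)k`, where `N = |β|` and `gr` is the height grading of `𝔤`. -/
def loopGrade (gr : ℤ → Submodule ℂ g) (N : ℤ) (i : ℤ) : Submodule ℂ (ℤ →₀ g) where
  carrier := {x | ∀ k : ℤ, x k ∈ gr (i - (N + 1) * k)}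
  add_mem' := fun hx hy k => by
    simpa using (gr _).add_mem (hx k) (hy k)
  zero_mem' := fun k => by simp
  smul_mem' := fun c x hx k => by
    simpa using (gr _).smul_mem c (hx k)

/-- The bilinear form `⟨X(λ),Y(λ)⟩_λ := ∑_{k∈ℤ} ⟨X_k, Y_{−k}⟩` on the loop algebra,
where `⟨·,·⟩` is the Killing form of `𝔤`. -/
noncomputable def loopForm [Module.Finite ℂ g] (x y : ℤ →₀ g) : ℂ :=
  x.sum fun k xk => killingForm ℂ g xk (y (-k))

theorem _root_.Submodule.apply_mem_of_mem_biSup {R M N P ι κ : Type*} [CommSemiring R]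
    [AddCommMonoid M] [AddCommMonoid N] [AddCommMonoid P]
    [Module R M] [Module R N] [Module R P] (f : M →ₗ[R] N →ₗ[R] P)
    {p : ι → Submodule R M} {q : κ → Submodule R N} {r : Submodule R P}
    {A : Set ι} {B : Set κ} (h : ∀ i ∈ A, ∀ j ∈ B, ∀ m ∈ p i, ∀ n ∈ q j, f m n ∈ r)
    {m : M} {n : N} (hm : m ∈ ⨆ i ∈ A, p i) (hn : n ∈ ⨆ j ∈ B, q j) : f m n ∈ r := by
  refine Submodule.map₂_le.mp ?_ m hm n hn
  simp only [Submodule.map₂_iSup_left, Submodule.map₂_iSup_right, iSup_le_iff]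
  exact fun j hj i hi => Submodule.map₂_le.mpr (h i hi j hj)

def loopGradeIn (gr : ℤ → Submodule ℂ g) (N : ℤ) (D : Set ℤ) : Submodule ℂ (ℤ →₀ g) where
  carrier := {x | ∀ k : ℤ, x k ∈ ⨆ i ∈ D, gr (i - (N + 1) * k)}
  add_mem' := fun hx hy k => by
    simpa using Submodule.add_mem _ (hx k) (hy k)
  zero_mem' := fun k => by simp
  smul_mem' := fun c x hx k => by
    simpa using Submodule.smul_mem _ c (hx k)

section

variable {gr : ℤ → Submodule ℂ g} {N : ℤ}

theorem loopGradeIn_mono {D D' : Set ℤ} (h : D ⊆ D') :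
    loopGradeIn gr N D ≤ loopGradeIn gr N D' :=
  fun _ hx k => biSup_mono (f := fun i => gr (i - (N + 1) * k)) h (hx k)

theorem loopGrade_le_loopGradeIn {D : Set ℤ} {i : ℤ} (hi : i ∈ D) :
    loopGrade gr N i ≤ loopGradeIn gr N D :=
  fun _ hx k => le_iSup₂ (f := fun i (_ : i ∈ D) => gr (i - (N + 1) * k)) i hi (hx k)

theorem biSup_loopGrade_le_loopGradeIn (D : Set ℤ) :
    ⨆ i ∈ D, loopGrade gr N i ≤ loopGradeIn gr N D :=
  iSup₂_le fun _ hi => loopGrade_le_loopGradeIn hi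

theorem single_mem_loopGrade {d : ℤ} {u : g} (hu : u ∈ gr d) (k : ℤ) :
    Finsupp.single k u ∈ loopGrade gr N (d + (N + 1) * k) := by
  intro j
  rw [Finsupp.single_apply]
  split_ifs with hkj
  · subst hkj
    simpa using hu
  · exact Submodule.zero_mem _

theorem loopBracket_mem_loopGradeIn
    (hbrack : ∀ i j : ℤ, ∀ x ∈ gr i, ∀ y ∈ gr j, ⁅x, y⁆ ∈ gr (i + j))
    {A B C : Set ℤ} (hABC : ∀ a ∈ A, ∀ b ∈ B, a + b ∈ C) {x y : ℤ →₀ g}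
    (hx : x ∈ loopGradeIn gr N A) (hy : y ∈ loopGradeIn gr N B) :
    loopBracket x y ∈ loopGradeIn gr N C := by
  intro m
  simp only [loopBracket, Finsupp.sum_apply, Finsupp.single_apply]
  refine Submodule.finsuppSum_mem _ _ _ _ fun i _ =>
    Submodule.finsuppSum_mem _ _ _ _ fun j _ => ?_
  split_ifs with hij
  · refine Submodule.apply_mem_of_mem_biSup (LieAlgebra.ad ℂ g : g →ₗ[ℂ] Module.End ℂ g)
      ?_ (hx i) (hy j)
    intro a ha b hb u hu v hv
    have hdeg : a - (N + 1) * i + (b - (N + 1) * j) = a + b - (N + 1) * m := by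
      rw [← hij]; ring
    have huv := hbrack _ _ u hu v hv
    rw [hdeg] at huv
    exact le_iSup₂ (f := fun c (_ : c ∈ C) => gr (c - (N + 1) * m)) _
      (hABC a ha b hb) huv
  · exact Submodule.zero_mem _

theorem loopForm_eq_zero_of_mem_loopGradeIn [Module.Finite ℂ g]
    (horth : ∀ k l : ℤ, k + l ≠ 0 → ∀ x ∈ gr k, ∀ y ∈ gr l, killingForm ℂ g x y = 0)
    {A B : Set ℤ} (hAB : ∀ a ∈ A, ∀ b ∈ B, a + b ≠ 0) {x y : ℤ →₀ g}
    (hx : x ∈ loopGradeIn gr N A) (hy : y ∈ loopGradeIn gr N B) :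
    loopForm x y = 0 := by
  refine Finset.sum_eq_zero fun k _ => ?_
  refine (Submodule.mem_bot ℂ).mp <|
    Submodule.apply_mem_of_mem_biSup (killingForm ℂ g) ?_ (hx k) (hy (-k))
  intro a ha b hb u hu v hv
  have hdeg : a - (N + 1) * k + (b - (N + 1) * -k) = a + b := by ring
  exact horth _ _ (hdeg ▸ hAB a ha b hb) u hu v hv

end

theorem stmt4_general [FiniteDimensional ℂ g]
    (gr : ℤ → Submodule ℂ g) (N : ℤ) (hN : 1 ≤ N)
    (hbrack : ∀ i j : ℤ, ∀ x ∈ gr i, ∀ y ∈ gr j, ⁅x, y⁆ ∈ gr (i + j))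
    (horth : ∀ k l : ℤ, k + l ≠ 0 → ∀ x ∈ gr k, ∀ y ∈ gr l, killingForm ℂ g x y = 0)
    (E : g) (hE : E ∈ gr 1) (Fβ : g) (hFβ : Fβ ∈ gr (-N))
    (L L₀ : ℤ →₀ g)
    (hL₀ : L₀ ∈ ⨆ (i : ℤ) (_ : -N ≤ i ∧ i ≤ 0), loopGrade gr N i)
    (hL : L = L₀ + (Finsupp.single 0 E + Finsupp.single 1 Fβ))
    (x : ℤ →₀ g) (hx : x ∈ ⨆ (i : ℤ) (_ : i < 0), loopGrade gr N i)
    (y : ℤ →₀ g) (hy : y ∈ ⨆ (i : ℤ) (_ : N + 1 ≤ i), loopGrade gr N i)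
    (wp wn : ℤ →₀ g)
    (hwp : wp ∈ ⨆ (i : ℤ) (_ : 0 ≤ i), loopGrade gr N i)
    (hwn : wn ∈ ⨆ (i : ℤ) (_ : i < 0), loopGrade gr N i) :
    loopForm L (loopBracket y wp - loopBracket x wn) = 0 := by
  have hf : Finsupp.single 0 E + Finsupp.single 1 Fβ ∈ loopGrade gr N 1 := by
    refine Submodule.add_mem _ ?_ ?_
    · simpa using single_mem_loopGrade (N := N) hE 0
    · simpa using single_mem_loopGrade (N := N) hFβ 1
  have hLdeg : L ∈ loopGradeIn gr N (Set.Icc (-N) 1) := by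
    rw [hL]
    exact Submodule.add_mem _
      (loopGradeIn_mono (Set.Icc_subset_Icc_right zero_le_one)
        (biSup_loopGrade_le_loopGradeIn _ hL₀))
      (loopGrade_le_loopGradeIn (D := Set.Icc (-N) 1) ⟨by omega, le_rfl⟩ hf)
  have hplus : loopBracket y wp ∈ loopGradeIn gr N (Set.Ici (N + 1)) :=
    loopBracket_mem_loopGradeIn hbrack (A := Set.Ici (N + 1)) (B := Set.Ici 0)
      (fun _ ha _ hb => le_add_of_le_of_nonneg ha hb)
      (biSup_loopGrade_le_loopGradeIn _ hy) (biSup_loopGrade_le_loopGradeIn _ hwp)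
  have hminus : loopBracket x wn ∈ loopGradeIn gr N (Set.Iic (-2)) :=
    loopBracket_mem_loopGradeIn hbrack (A := Set.Iio 0) (B := Set.Iio 0)
      (fun a ha b hb => show a + b ≤ -2 by rw [Set.mem_Iio] at ha hb; omega)
      (biSup_loopGrade_le_loopGradeIn _ hx) (biSup_loopGrade_le_loopGradeIn _ hwn)
  refine loopForm_eq_zero_of_mem_loopGradeIn horth ?_ hLdeg <|
    Submodule.sub_mem _ (loopGradeIn_mono Set.subset_union_left hplus)
      (loopGradeIn_mono Set.subset_union_right hminus)
  intro a ha b hb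
  simp only [Set.mem_Icc, Set.mem_union, Set.mem_Ici, Set.mem_Iic] at ha hb
  omega

/-- For every `L(λ) ∈ T_λ`, every `x(λ) ∈ ⊕_{i<0} g̃ᵢ`, every `y(λ) ∈ ⊕_{i≥N+1} g̃ᵢ`
(`N = |β|`), and every `w(λ) ∈ g̃`, one has
`⟨L(λ), [y(λ), w(λ)₊] − [x(λ), w(λ)₋]⟩_λ = 0`, where `w(λ) = w(λ)₊ + w(λ)₋` is the
decomposition of `w(λ)` with `w(λ)₊ ∈ g̃₊ = ⊕_{i≥0} g̃ᵢ` and `w(λ)₋ ∈ g̃₋ = ⊕_{i<0} g̃ᵢ`.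
Here `T_λ = ⊕_{−N ≤ i ≤ 0} g̃ᵢ + f` with `f = ∑ᵢ eᵢ + λ e_{−β}`, where
`E := ∑ᵢ eᵢ ∈ 𝔤₁` and `Fβ := e_{−β} ∈ 𝔤_{−N}`. -/
theorem stmt4 [FiniteDimensional ℂ g] [LieAlgebra.IsSimple ℂ g]
    (gr : ℤ → Submodule ℂ g) (N : ℤ) (hN : 1 ≤ N)
    (hinternal : DirectSum.IsInternal gr)
    (hsupp : ∀ m : ℤ, N < |m| → gr m = ⊥)
    (hbrack : ∀ i j : ℤ, ∀ x ∈ gr i, ∀ y ∈ gr j, ⁅x, y⁆ ∈ gr (i + j))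
    (horth : ∀ k l : ℤ, k + l ≠ 0 → ∀ x ∈ gr k, ∀ y ∈ gr l, killingForm ℂ g x y = 0)
    (E : g) (hE : E ∈ gr 1) (Fβ : g) (hFβ : Fβ ∈ gr (-N))
    (L L₀ : ℤ →₀ g)
    (hL₀ : L₀ ∈ ⨆ (i : ℤ) (_ : -N ≤ i ∧ i ≤ 0), loopGrade gr N i)
    (hL : L = L₀ + (Finsupp.single 0 E + Finsupp.single 1 Fβ))
    (x : ℤ →₀ g) (hx : x ∈ ⨆ (i : ℤ) (_ : i < 0), loopGrade gr N i)
    (y : ℤ →₀ g) (hy : y ∈ ⨆ (i : ℤ) (_ : N + 1 ≤ i), loopGrade gr N i)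
    (w wp wn : ℤ →₀ g)
    (hwp : wp ∈ ⨆ (i : ℤ) (_ : 0 ≤ i), loopGrade gr N i)
    (hwn : wn ∈ ⨆ (i : ℤ) (_ : i < 0), loopGrade gr N i)
    (hw : w = wp + wn) :
    loopForm L (loopBracket y wp - loopBracket x wn) = 0 :=
  stmt4_general gr N hN hbrack horth E hE Fβ hFβ L L₀ hL₀ hL x hx y hy wp wn hwp hwn

end PeriodicFullKostantToda
end

section
/- Let P be a homogeneous ad-invariant polynomial function on 𝔤 of degree m+1, let p, q ∈ ℕ, i₁,…,i_p ∈ {1,…,ℓ}, and γ₁,…,γ_q ∈ Φ. If m + 1 − (p+q) + Σ_{a=1}^{q} |γ_a| < 0 or Σ_{a=1}^{q} |γ_a| > 0, then for every y ∈ 𝔥 ⊕ 𝔤₁ the (p+q)-th differential of P at y satisfies d^{p+q}_y P(h_{i₁},…,h_{i_p}, e_{γ₁},…,e_{γ_q}) = 0. -/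
/-!
Let `w` be the root height of a Killing-form coordinate (`0` on the Cartan part), so that
`ad h₀` acts on the coordinates diagonally with eigenvalues `w`. Ad-invariance of `P` at `h₀`
is the weighted Euler identity `∑ₛ wₛ xₛ ∂ₛQ = 0`, so every monomial of `Q` has height `0`
besides having degree `m + 1`. Substituting `x = y + ∑ₐ tₐ vₐ` turns each coordinate `xₛ` into
an affine form in `t` whose constant term has height `0` or `1` (as `y ∈ 𝔥 ⊕ 𝔤₁`) and whose
coefficient of `tₐ` vanishes unless `wₛ = |vₐ|`. A monomial `t^κ` of `R` therefore comes from
taking `|κ|` linear terms and `m + 1 - |κ|` constant terms, `j` of them of height `1`, with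
`∑ₐ κₐ |vₐ| + j = 0`. For `κ = t₁ ⋯ t_{p+q}` this is incompatible with either hypothesis.
-/

open Finsupp

namespace MvPolynomial

variable {R σ τ M : Type*} [CommSemiring R]

section WeightBelow

variable [AddCommMonoid M] (ω : τ → M) (S : AddSubmonoid M)

/-- The dehomogenized monomials of a polynomial that becomes weighted homogeneous of degree `D`
after adjoining variables whose weights generate `S`. -/
def weightBelow (D : M) : Set (τ →₀ ℕ) := {κ | ∃ x ∈ S, weight ω κ + x = D}

variable {ω S}

open scoped Pointwise in
lemma weightBelow_add_subset (D₁ D₂ : M) :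
    weightBelow ω S D₁ + weightBelow ω S D₂ ⊆ weightBelow ω S (D₁ + D₂) := by
  rintro _ ⟨κ₁, ⟨x₁, hx₁, rfl⟩, κ₂, ⟨x₂, hx₂, rfl⟩, rfl⟩
  exact ⟨x₁ + x₂, S.add_mem hx₁ hx₂, by rw [map_add]; abel⟩

lemma one_mem_restrictSupport_weightBelow :
    (1 : MvPolynomial τ R) ∈ restrictSupport R (weightBelow ω S 0) := by
  rw [← C_1, C_apply, monomial_mem_restrictSupport]
  exact .inl ⟨0, S.zero_mem, by simp⟩

lemma mul_mem_restrictSupport_weightBelow {f g : MvPolynomial τ R} {D₁ D₂ : M}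
    (hf : f ∈ restrictSupport R (weightBelow ω S D₁))
    (hg : g ∈ restrictSupport R (weightBelow ω S D₂)) :
    f * g ∈ restrictSupport R (weightBelow ω S (D₁ + D₂)) :=
  restrictSupport_mono R (weightBelow_add_subset D₁ D₂)
    (by rw [restrictSupport_add]; exact Submodule.mul_mem_mul hf hg)

lemma pow_mem_restrictSupport_weightBelow {f : MvPolynomial τ R} {D : M}
    (hf : f ∈ restrictSupport R (weightBelow ω S D)) (n : ℕ) :
    f ^ n ∈ restrictSupport R (weightBelow ω S (n • D)) := by
  induction n with
  | zero => simpa using one_mem_restrictSupport_weightBelow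
  | succ n ih => rw [pow_succ, succ_nsmul]; exact mul_mem_restrictSupport_weightBelow ih hf

lemma prod_pow_mem_restrictSupport_weightBelow {ι : Type*} (s : Finset ι)
    {F : ι → MvPolynomial τ R} {D : ι → M}
    (hF : ∀ i ∈ s, F i ∈ restrictSupport R (weightBelow ω S (D i))) (n : ι → ℕ) :
    ∏ i ∈ s, F i ^ n i ∈ restrictSupport R (weightBelow ω S (∑ i ∈ s, n i • D i)) := by
  classical
  induction s using Finset.induction_on with
  | empty => simpa using one_mem_restrictSupport_weightBelow
  | insert i s hi ih =>
    rw [Finset.prod_insert hi, Finset.sum_insert hi]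
    exact mul_mem_restrictSupport_weightBelow
      (pow_mem_restrictSupport_weightBelow (hF i (by simp)) _)
      (ih fun j hj => hF j (by simp [hj]))

theorem IsWeightedHomogeneous.aeval_mem_restrictSupport_weightBelow {ω₀ : σ → M}
    {f : MvPolynomial σ R} {D : M} (hf : f.IsWeightedHomogeneous ω₀ D)
    {A : σ → MvPolynomial τ R} (hA : ∀ s, A s ∈ restrictSupport R (weightBelow ω S (ω₀ s))) :
    aeval A f ∈ restrictSupport R (weightBelow ω S D) := by
  rw [aeval_def, eval₂_eq]
  refine Submodule.sum_mem _ fun k hk => ?_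
  rw [← Algebra.smul_def, ← hf (mem_support_iff.mp hk), weight_apply]
  exact Submodule.smul_mem _ _ (prod_pow_mem_restrictSupport_weightBelow _ (fun s _ => hA s) k)

end WeightBelow

lemma coeff_X_mul_pderiv (k : σ →₀ ℕ) (s : σ) (f : MvPolynomial σ R) :
    coeff k (X s * pderiv s f) = k s * coeff k f := by
  induction f using induction_on' with
  | monomial m r =>
    classical
    rw [X_mul_pderiv_monomial, coeff_smul, coeff_monomial]
    split_ifs with h
    · rw [h, nsmul_eq_mul]
    · simp
  | add f g hf hg => simp only [map_add, mul_add, coeff_add, hf, hg]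

theorem isWeightedHomogeneous_zero_of_sum_zsmul_X_mul_pderiv_eq_zero {R : Type*} [CommRing R]
    [IsAddTorsionFree R] [Fintype σ] {w : σ → ℤ} {f : MvPolynomial σ R}
    (hf : ∑ s, w s • (X s * pderiv s f) = 0) : f.IsWeightedHomogeneous w 0 := by
  intro k hk
  have hcoeff : weight w k • coeff k f = 0 := by
    rw [← coeff_zero k, ← hf, coeff_sum, weight_eq_sum, Finset.sum_smul]
    refine Finset.sum_congr rfl fun s _ => ?_
    rw [coeff_smul, coeff_X_mul_pderiv, nsmul_eq_mul, mul_comm, mul_smul, natCast_zsmul,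
      nsmul_eq_mul]
  exact (IsAddTorsionFree.zsmul_eq_zero_iff_left hk).mp hcoeff

theorem IsWeightedHomogeneous.prodMk {M₁ M₂ : Type*} [AddCommMonoid M₁] [AddCommMonoid M₂]
    {ω₁ : σ → M₁} {ω₂ : σ → M₂} {D₁ : M₁} {D₂ : M₂} {f : MvPolynomial σ R}
    (h₁ : f.IsWeightedHomogeneous ω₁ D₁) (h₂ : f.IsWeightedHomogeneous ω₂ D₂) :
    f.IsWeightedHomogeneous (fun s => (ω₁ s, ω₂ s)) (D₁, D₂) := by
  intro k hk
  rw [← h₁ hk, ← h₂ hk]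
  ext <;> simp [weight_apply, Finsupp.sum, Prod.fst_sum, Prod.snd_sum]

end MvPolynomial

namespace PeriodicFullKostantToda

open MvPolynomial

/-- `(d, j)`: `d` constant terms of the affine substitution were used, `j` of them of
height `1`. -/
def bidegreeCone : AddSubmonoid (ℕ × ℤ) where
  carrier := {x | 0 ≤ x.2 ∧ x.2 ≤ x.1}
  add_mem' := by
    rintro ⟨a, b⟩ ⟨c, d⟩ ⟨hb, hba⟩ ⟨hd, hdc⟩
    simp only [Set.mem_ofPred_eq, Prod.mk_add_mk, Nat.cast_add] at *
    omega
  zero_mem' := by simp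

lemma affine_mem_restrictSupport_weightBelow {R σ τ : Type*} [CommSemiring R] [Fintype τ]
    {w : σ → ℤ} {c : τ → ℤ} {z : σ → R} {B : τ → σ → R}
    (hz : ∀ s, z s ≠ 0 → w s = 0 ∨ w s = 1) (hB : ∀ a s, B a s ≠ 0 → w s = c a) (s : σ) :
    C (z s) + ∑ a, C (B a s) * X a ∈
      restrictSupport R (weightBelow (fun a => (1, c a)) bidegreeCone (1, w s)) := by
  refine add_mem ?_ (Submodule.sum_mem _ fun a _ => ?_)
  · rw [C_apply, monomial_mem_restrictSupport, or_iff_not_imp_right]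
    intro hs
    refine ⟨(1, w s), ?_, by simp⟩
    rcases hz s hs with h | h <;> simp [bidegreeCone, h]
  · rw [C_mul_X_eq_monomial, monomial_mem_restrictSupport, or_iff_not_imp_right]
    intro has
    exact ⟨0, bidegreeCone.zero_mem, by simp [weight_single, hB a s has]⟩

theorem coeff_sum_single_aeval_affine_eq_zero {R σ τ : Type*} [CommSemiring R] [Fintype τ]
    {w : σ → ℤ} {c : τ → ℤ} {z : σ → R} {B : τ → σ → R} {Q : MvPolynomial σ R} {D : ℕ}
    (hQ : Q.IsWeightedHomogeneous (fun s => (1, w s)) (D, 0))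
    (hz : ∀ s, z s ≠ 0 → w s = 0 ∨ w s = 1) (hB : ∀ a s, B a s ≠ 0 → w s = c a)
    (hc : (D : ℤ) - Fintype.card τ + ∑ a, c a < 0 ∨ 0 < ∑ a, c a) :
    coeff (∑ a, single a 1) (aeval (fun s => C (z s) + ∑ a, C (B a s) * X a) Q) = 0 := by
  by_contra hne
  obtain ⟨⟨d, j⟩, ⟨hj, hjd⟩, hsum⟩ :=
    hQ.aeval_mem_restrictSupport_weightBelow (affine_mem_restrictSupport_weightBelow hz hB)
      (MvPolynomial.mem_support_iff.mpr hne)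
  have hweight : weight (fun a => ((1 : ℕ), c a)) (∑ a : τ, single a 1) =
      (Fintype.card τ, ∑ a, c a) := by
    ext <;> simp [map_sum, weight_single, Prod.fst_sum, Prod.snd_sum]
  rw [hweight, Prod.mk_add_mk, Prod.mk.injEq] at hsum
  omega

section Coordinates

variable {g : Type} [LieRing g] [LieAlgebra ℂ g] {σ : Type} {φ : g →ₗ[ℂ] (σ → ℂ)} {w : σ → ℤ}
  {h₀ : g}

lemma lie_eq_smul_of_mem_span {μ : ℂ} {S : Set g} (hS : ∀ x ∈ S, ⁅h₀, x⁆ = μ • x) {x : g}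
    (hx : x ∈ Submodule.span ℂ S) : ⁅h₀, x⁆ = μ • x := by
  have hle : Submodule.span ℂ S ≤ (LieAlgebra.ad ℂ g h₀).eigenspace μ :=
    Submodule.span_le.mpr fun x hx => Module.End.mem_eigenspace_iff.mpr (hS x hx)
  exact Module.End.mem_eigenspace_iff.mp (hle hx)

lemma coord_height_eq_of_lie_eq_zsmul (hφ₀ : ∀ x s, φ ⁅h₀, x⁆ s = w s * φ x s) {x : g} {μ : ℤ}
    (hx : ⁅h₀, x⁆ = (μ : ℂ) • x) {s : σ} (hs : φ x s ≠ 0) : w s = μ := by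
  have h := hφ₀ x s
  rw [hx, map_smul, Pi.smul_apply, smul_eq_mul] at h
  exact_mod_cast (mul_right_cancel₀ hs h).symm

lemma isWeightedHomogeneous_zero_of_lie_invariant [Fintype σ]
    (hφ₀ : ∀ x s, φ ⁅h₀, x⁆ s = w s * φ x s) (hφ : Function.Surjective φ)
    {Q : MvPolynomial σ ℂ} (hinv : ∀ x, ∑ s, eval (φ x) (pderiv s Q) * φ ⁅h₀, x⁆ s = 0) :
    Q.IsWeightedHomogeneous w 0 := by
  refine isWeightedHomogeneous_zero_of_sum_zsmul_X_mul_pderiv_eq_zero (funext fun z => ?_)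
  obtain ⟨x, rfl⟩ := hφ z
  rw [map_sum, map_zero, ← hinv x]
  refine Finset.sum_congr rfl fun s _ => ?_
  rw [hφ₀, zsmul_eq_mul, map_mul, map_mul, map_intCast, eval_X]
  ring

lemma coord_height_of_mem_sup_span (hφ₀ : ∀ x s, φ ⁅h₀, x⁆ s = w s * φ x s)
    {S₀ S₁ : Set g} (hS₀ : ∀ x ∈ S₀, ⁅h₀, x⁆ = 0) (hS₁ : ∀ x ∈ S₁, ⁅h₀, x⁆ = x) {y : g}
    (hy : y ∈ Submodule.span ℂ S₀ ⊔ Submodule.span ℂ S₁) (s : σ) (hs : φ y s ≠ 0) :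
    w s = 0 ∨ w s = 1 := by
  obtain ⟨y₀, hy₀, y₁, hy₁, rfl⟩ := Submodule.mem_sup.mp hy
  rw [map_add, Pi.add_apply] at hs
  by_cases h₀s : φ y₀ s = 0
  · refine .inr (coord_height_eq_of_lie_eq_zsmul hφ₀ (μ := 1) ?_ (by simpa [h₀s] using hs))
    exact lie_eq_smul_of_mem_span (fun x hx => by simp [hS₁ x hx]) hy₁
  · refine .inl (coord_height_eq_of_lie_eq_zsmul hφ₀ (μ := 0) ?_ h₀s)
    exact lie_eq_smul_of_mem_span (fun x hx => by simp [hS₀ x hx]) hy₀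

end Coordinates

lemma coord_lie_eq_height_mul {g : Type} [LieRing g] [LieAlgebra ℂ g] {ℓ : ℕ} {Φ : Type}
    {ht : Φ → ℤ} {negr : Φ → Φ} (hnegr : ∀ γ, ht (negr γ) = -ht γ) {e : Φ → g} {hc : Fin ℓ → g}
    {φ : g →ₗ[ℂ] (Fin ℓ ⊕ Φ → ℂ)}
    (hφ : ∀ (x : g) (s : Fin ℓ ⊕ Φ),
      φ x s = Sum.elim (fun i => killingForm ℂ g (hc i) x)
        (fun γ => killingForm ℂ g (e (negr γ)) x) s)
    {h₀ : g} (hh₀e : ∀ γ, ⁅h₀, e γ⁆ = (ht γ : ℂ) • e γ) (hh₀h : ∀ i, ⁅h₀, hc i⁆ = 0)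
    (x : g) (s : Fin ℓ ⊕ Φ) :
    φ ⁅h₀, x⁆ s = Sum.elim (0 : Fin ℓ → ℤ) ht s * φ x s := by
  rcases s with i | γ
  · rw [hφ, Sum.elim_inl, ← LieModule.traceForm_apply_lie_apply, ← lie_skew, hh₀h]
    simp
  · rw [hφ, hφ, Sum.elim_inr, Sum.elim_inr, Sum.elim_inr, ← LieModule.traceForm_apply_lie_apply,
      ← lie_skew, hh₀e, hnegr]
    simp

theorem stmt7_general
    {g : Type} [LieRing g] [LieAlgebra ℂ g]
    (ℓ : ℕ) (Φ : Type) [Fintype Φ]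
    (ht : Φ → ℤ) (negr : Φ → Φ)
    (hnegr : ∀ γ, ht (negr γ) = -ht γ)
    (e : Φ → g) (hc : Fin ℓ → g)
    (φ : g →ₗ[ℂ] (Fin ℓ ⊕ Φ → ℂ))
    (hφ : ∀ (x : g) (s : Fin ℓ ⊕ Φ),
      φ x s = Sum.elim (fun i => killingForm ℂ g (hc i) x)
        (fun γ => killingForm ℂ g (e (negr γ)) x) s)
    (hφbij : Function.Bijective φ)
    (h₀ : g)
    (hh₀e : ∀ γ, ⁅h₀, e γ⁆ = (ht γ : ℂ) • e γ)
    (hh₀h : ∀ i, ⁅h₀, hc i⁆ = 0)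
    (m : ℕ) (P : g → ℂ) (Q : MvPolynomial (Fin ℓ ⊕ Φ) ℂ)
    (hP : ∀ x, P x = MvPolynomial.eval (φ x) Q)
    (hhom : Q.IsHomogeneous (m + 1))
    (hinv : ∀ x y : g,
      ∑ s : Fin ℓ ⊕ Φ,
        MvPolynomial.eval (φ x) (MvPolynomial.pderiv s Q) * φ ⁅y, x⁆ s = 0)
    (p q : ℕ) (idx : Fin p → Fin ℓ) (γs : Fin q → Φ)
    (hcond : ((m : ℤ) + 1 - (p + q) + ∑ a : Fin q, ht (γs a) < 0) ∨
      (0 < ∑ a : Fin q, ht (γs a))) :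
    ∀ y ∈ Submodule.span ℂ (Set.range hc) ⊔
        Submodule.span ℂ (e '' {γ | ht γ = 1}),
      ∀ R : MvPolynomial (Fin (p + q)) ℂ,
        (∀ t : Fin (p + q) → ℂ,
          P (y + ∑ a : Fin (p + q),
            t a • (Fin.append (fun c => hc (idx c)) (fun c => e (γs c)) a)) =
          MvPolynomial.eval t R) →
        MvPolynomial.coeff (∑ a : Fin (p + q), Finsupp.single a 1) R = 0 := by
  intro y hy R hR
  set v : Fin (p + q) → g := Fin.append (fun c => hc (idx c)) (fun c => e (γs c))
  set c : Fin (p + q) → ℤ := Fin.append 0 (fun a => ht (γs a))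
  have hφ₀ := coord_lie_eq_height_mul hnegr hφ hh₀e hh₀h
  have hv : ∀ a, ⁅h₀, v a⁆ = (c a : ℂ) • v a :=
    Fin.addCases (by simp [v, c, hh₀h]) (by simp [v, c, hh₀e])
  have hRA : R = aeval (fun s => C (φ y s) + ∑ a, C (φ (v a) s) * X a) Q := by
    refine MvPolynomial.funext fun t => ?_
    rw [← hR, hP]
    change aeval _ Q = aeval t (aeval _ Q)
    rw [comp_aeval_apply]
    congr 1
    ext s
    simp [mul_comm]
  rw [hRA]
  refine coeff_sum_single_aeval_affine_eq_zero
    (hhom.prodMk (isWeightedHomogeneous_zero_of_lie_invariant hφ₀ hφbij.2 (hinv · h₀)))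
    (coord_height_of_mem_sup_span hφ₀ ?_ ?_ hy)
    (fun a s => coord_height_eq_of_lie_eq_zsmul hφ₀ (hv a)) ?_
  · rintro _ ⟨i, rfl⟩
    exact hh₀h i
  · rintro _ ⟨γ, hγ, rfl⟩
    simp [hh₀e, Set.mem_ofPred_eq.mp hγ]
  · simpa [c, Fin.sum_univ_add] using hcond

/-- Context as in the paper: `𝔤` a finite-dimensional complex simple Lie algebra of rank `ℓ`,
with simple coroots `h₁,…,h_ℓ` (spanning the Cartan subalgebra `𝔥`), root system `Φ` with
height function `ht`, root negation `negr`, and root vectors `e_γ`; `𝔤₁` is the span of the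
root vectors of height `1`.  Let `P` be a polynomial function on `𝔤` (written as `Q` in the
Killing-form coordinates `φ`), homogeneous of degree `m+1` and ad-invariant.  Let
`p, q ∈ ℕ`, `i₁,…,i_p ∈ {1,…,ℓ}` and `γ₁,…,γ_q ∈ Φ`.  If
`m + 1 − (p+q) + ∑ₐ |γₐ| < 0` or `∑ₐ |γₐ| > 0`, then for every `y ∈ 𝔥 ⊕ 𝔤₁` the
`(p+q)`-th differential of `P` at `y` satisfies
`d^{p+q}_y P(h_{i₁},…,h_{i_p}, e_{γ₁},…,e_{γ_q}) = 0`.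
The differential is encoded polynomially: if `R` is the polynomial in `p+q` variables
`t₁,…,t_{p+q}` with `R(t) = P(y + ∑ₐ tₐ vₐ)` (where `v = (h_{i₁},…,h_{i_p},e_{γ₁},…,e_{γ_q})`),
then `d^{p+q}_y P(v₁,…,v_{p+q})` is the coefficient of the monomial `t₁⋯t_{p+q}` in `R`. -/
theorem stmt7
    {g : Type} [LieRing g] [LieAlgebra ℂ g] [FiniteDimensional ℂ g]
    [LieAlgebra.IsSimple ℂ g]
    (ℓ : ℕ) (Φ : Type) [Fintype Φ] [DecidableEq Φ]
    (ht : Φ → ℤ) (negr : Φ → Φ)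
    (hnegr : ∀ γ, ht (negr γ) = -ht γ)
    (hht : ∀ γ, ht γ ≠ 0)
    (e : Φ → g) (hc : Fin ℓ → g)
    (b : Module.Basis (Fin ℓ ⊕ Φ) ℂ g) (hb : ∀ s, b s = Sum.elim hc e s)
    (φ : g →ₗ[ℂ] (Fin ℓ ⊕ Φ → ℂ))
    (hφ : ∀ (x : g) (s : Fin ℓ ⊕ Φ),
      φ x s = Sum.elim (fun i => killingForm ℂ g (hc i) x)
        (fun γ => killingForm ℂ g (e (negr γ)) x) s)
    (hφbij : Function.Bijective φ)
    (h₀ : g)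
    (hh₀e : ∀ γ, ⁅h₀, e γ⁆ = (ht γ : ℂ) • e γ)
    (hh₀h : ∀ i, ⁅h₀, hc i⁆ = 0)
    (m : ℕ) (P : g → ℂ) (Q : MvPolynomial (Fin ℓ ⊕ Φ) ℂ)
    (hP : ∀ x, P x = MvPolynomial.eval (φ x) Q)
    (hhom : Q.IsHomogeneous (m + 1))
    (hinv : ∀ x y : g,
      ∑ s : Fin ℓ ⊕ Φ,
        MvPolynomial.eval (φ x) (MvPolynomial.pderiv s Q) * φ ⁅y, x⁆ s = 0)
    (p q : ℕ) (idx : Fin p → Fin ℓ) (γs : Fin q → Φ)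
    (hcond : ((m : ℤ) + 1 - (p + q) + ∑ a : Fin q, ht (γs a) < 0) ∨
      (0 < ∑ a : Fin q, ht (γs a))) :
    ∀ y ∈ Submodule.span ℂ (Set.range hc) ⊔
        Submodule.span ℂ (e '' {γ | ht γ = 1}),
      ∀ R : MvPolynomial (Fin (p + q)) ℂ,
        (∀ t : Fin (p + q) → ℂ,
          P (y + ∑ a : Fin (p + q),
            t a • (Fin.append (fun c => hc (idx c)) (fun c => e (γs c)) a)) =
          MvPolynomial.eval t R) →
        MvPolynomial.coeff (∑ a : Fin (p + q), Finsupp.single a 1) R = 0 :=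
  stmt7_general ℓ Φ ht negr hnegr e hc φ hφ hφbij h₀ hh₀e hh₀h m P Q hP hhom hinv p q idx γs hcond

end PeriodicFullKostantToda
end

section
/- If P is an ad-invariant polynomial function on 𝔤 and Y ∈ 𝔤_{>0}, then the gradient ∇_Y P of P at Y with respect to the Killing form lies in 𝔤_{≥0}; equivalently, ⟨∇_Y P, Z⟩ = 0 for every Z ∈ 𝔤_{>0}. -/
/-!
Let `D = ad h₀` be the grading derivation. Invariance of `P` gives `dP_x(D x) = 0` for all `x`.
For `x = ∑ a_γ e_γ` in `𝔤_{>0}`, the curve `u(c) = ∑ a_γ c^{ht γ} e_γ` satisfies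
`c u'(c) = D (u c)`, so the polynomial `R(c) = P(u c)` satisfies `c R'(c) = 0`, hence is constant.
Comparing `c = 1` with `c = 0` (all heights are positive) gives `P x = P 0`: `P` is constant on
`𝔤_{>0}`, so its derivative in any direction of `𝔤_{>0}` vanishes there.
-/

open Polynomial in
theorem MvPolynomial.derivative_aeval {R σ : Type*} [CommSemiring R] [Fintype σ]
    (v : σ → R[X]) (p : MvPolynomial σ R) :
    derivative (aeval v p) = ∑ i, aeval v (pderiv i p) * derivative (v i) := by
  classical
  induction p using MvPolynomial.induction_on with
  | C a => simp
  | add p q hp hq => simp only [map_add, hp, hq, add_mul, Finset.sum_add_distrib]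
  | mul_X p j hp =>
    simp only [Derivation.leibniz, pderiv_X, map_add, map_mul, smul_eq_mul, aeval_X,
      derivative_mul, hp, add_mul, Finset.sum_add_distrib, Finset.sum_mul]
    simp [Pi.single_apply, add_comm, mul_comm, mul_assoc]

open Polynomial in
theorem MvPolynomial.polynomial_eval_aeval {R σ : Type*} [CommSemiring R]
    (v : σ → R[X]) (p : MvPolynomial σ R) (c : R) :
    (aeval v p).eval c = eval (fun i => (v i).eval c) p := by
  rw [← Polynomial.coe_aeval_eq_eval, comp_aeval_apply, ← coe_aeval_eq_eval]
  rfl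

open Polynomial in
theorem Polynomial.eq_zero_of_forall_mul_eval_eq_zero {R : Type*} [CommRing R] [IsDomain R]
    [Infinite R] {p : R[X]} (h : ∀ c, c * p.eval c = 0) : p = 0 :=
  (mul_eq_zero.mp (funext (q := 0) fun c => by simpa using h c)).resolve_left X_ne_zero

namespace PeriodicFullKostantToda

open Polynomial

noncomputable section

section WeightedCurve

variable {K V σ ι : Type*} [Field K] [AddCommGroup V] [Module K V] [Fintype ι]
  (φ : V →ₗ[K] σ → K) (e : ι → V) (n : ι → ℕ) (a : ι → K)

/-- `c ↦ c ^ D (∑ i, a i • e i)` for a derivation `D` acting on `e i` by `n i`. -/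
def weightedCurve (c : K) : V := ∑ i, (a i * c ^ n i) • e i

def weightedCurveCoord (s : σ) : K[X] := ∑ i, C (a i * φ (e i) s) * X ^ n i

theorem eval_weightedCurveCoord (c : K) (s : σ) :
    (weightedCurveCoord φ e n a s).eval c = φ (weightedCurve e n a c) s := by
  simp only [weightedCurveCoord, weightedCurve, eval_finsetSum, eval_mul, eval_C, eval_pow,
    eval_X, map_sum, map_smul, Finset.sum_apply, Pi.smul_apply, smul_eq_mul]
  exact Finset.sum_congr rfl fun i _ => mul_right_comm _ _ _

theorem mul_eval_derivative_weightedCurveCoord (D : V →ₗ[K] V)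
    (hD : ∀ i, D (e i) = (n i : K) • e i) (c : K) (s : σ) :
    c * (derivative (weightedCurveCoord φ e n a s)).eval c = φ (D (weightedCurve e n a c)) s := by
  have hpow : ∀ m : ℕ, c * ((m : K) * c ^ (m - 1)) = m * c ^ m := by
    rintro (_ | m)
    · simp
    · simp only [Nat.add_sub_cancel, pow_succ, Nat.cast_succ]
      ring
  simp only [weightedCurveCoord, weightedCurve, derivative_C_mul_X_pow, eval_finsetSum,
    eval_mul, eval_C, eval_pow, eval_X, Finset.mul_sum, map_sum,
    map_smul, hD, smul_smul, Finset.sum_apply, Pi.smul_apply, smul_eq_mul]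
  refine Finset.sum_congr rfl fun i _ => ?_
  linear_combination (a i * φ (e i) s) * hpow (n i)

theorem weightedCurve_one : weightedCurve e n a 1 = ∑ i, a i • e i := by
  simp [weightedCurve]

theorem weightedCurve_zero (hn : ∀ i, n i ≠ 0) : weightedCurve e n a 0 = 0 := by
  simp [weightedCurve, hn]

theorem eval_eq_eval_zero_of_mem_span [CharZero K] [Fintype σ] (Q : MvPolynomial σ K)
    (D : V →ₗ[K] V)
    (hQ : ∀ x, ∑ s, MvPolynomial.eval (φ x) (MvPolynomial.pderiv s Q) * φ (D x) s = 0)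
    (hD : ∀ i, D (e i) = (n i : K) • e i) (hn : ∀ i, n i ≠ 0) {x : V}
    (hx : x ∈ Submodule.span K (Set.range e)) :
    MvPolynomial.eval (φ x) Q = MvPolynomial.eval (φ 0) Q := by
  obtain ⟨a, rfl⟩ := (Submodule.mem_span_range_iff_exists_fun K).mp hx
  set v := weightedCurveCoord φ e n a
  have heval : ∀ c p, (MvPolynomial.aeval v p).eval c =
      MvPolynomial.eval (φ (weightedCurve e n a c)) p := fun c p => by
    rw [MvPolynomial.polynomial_eval_aeval]
    congr with s
    exact eval_weightedCurveCoord φ e n a c s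
  have hderiv : derivative (MvPolynomial.aeval v Q) = 0 := by
    refine eq_zero_of_forall_mul_eval_eq_zero fun c => ?_
    rw [MvPolynomial.derivative_aeval, eval_finsetSum, Finset.mul_sum,
      ← hQ (weightedCurve e n a c)]
    refine Finset.sum_congr rfl fun s _ => ?_
    rw [eval_mul, heval, ← mul_eval_derivative_weightedCurveCoord φ e n a D hD]
    ring
  calc _ = (MvPolynomial.aeval v Q).eval 1 := by rw [heval, weightedCurve_one]
    _ = (MvPolynomial.aeval v Q).eval 0 := by rw [eq_C_of_derivative_eq_zero hderiv]; simp
    _ = _ := by rw [heval, weightedCurve_zero e n a hn]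

end WeightedCurve

end

theorem stmt8_general
    {g : Type} [LieRing g] [LieAlgebra ℂ g]
    (ℓ : ℕ) (Φ : Type) [Fintype Φ]
    (ht : Φ → ℤ)
    (e : Φ → g)
    (φ : g →ₗ[ℂ] (Fin ℓ ⊕ Φ → ℂ))
    (h₀ : g)
    (hh₀e : ∀ γ, ⁅h₀, e γ⁆ = (ht γ : ℂ) • e γ)
    (P : g → ℂ) (Q : MvPolynomial (Fin ℓ ⊕ Φ) ℂ)
    (hP : ∀ x, P x = MvPolynomial.eval (φ x) Q)
    (hinv : ∀ x y : g,
      ∑ s : Fin ℓ ⊕ Φ,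
        MvPolynomial.eval (φ x) (MvPolynomial.pderiv s Q) * φ ⁅y, x⁆ s = 0)
    (Y : g) (hY : Y ∈ Submodule.span ℂ (e '' {γ | 0 < ht γ})) :
    ∀ Z ∈ Submodule.span ℂ (e '' {γ | 0 < ht γ}),
      ∀ S : Polynomial ℂ, (∀ t : ℂ, P (Y + t • Z) = S.eval t) → S.coeff 1 = 0 := by
  have hconst : ∀ x ∈ Submodule.span ℂ (e '' {γ | 0 < ht γ}), P x = P 0 := by
    rw [Set.image_eq_range]
    intro x hx
    have hQ : ∀ x, ∑ s, MvPolynomial.eval (φ x) (MvPolynomial.pderiv s Q) *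
        φ (LieAlgebra.ad ℂ g h₀ x) s = 0 := fun x => hinv x h₀
    have hD : ∀ γ : {γ | 0 < ht γ}, LieAlgebra.ad ℂ g h₀ (e γ) = ((ht γ).toNat : ℂ) • e γ := by
      intro γ
      rw [LieAlgebra.ad_apply, hh₀e, ← Int.cast_natCast, Int.toNat_of_nonneg γ.2.le]
    rw [hP, hP]
    exact eval_eq_eval_zero_of_mem_span φ _ _ Q _ hQ hD (fun γ => (Int.lt_toNat.mpr γ.2).ne') hx
  intro Z hZ S hS
  have hS_const : S = C (P 0) := funext fun t => by
    rw [← hS t, hconst _ (add_mem hY (Submodule.smul_mem _ t hZ)), eval_C]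
  rw [hS_const, coeff_C_of_ne_zero one_ne_zero]

/-- Context: `𝔤` a finite-dimensional complex simple Lie algebra of rank `ℓ`, with simple
coroots `h₁,…,h_ℓ`, root system `Φ` with height function `ht`, root negation `negr`, and
root vectors `e_γ`; `𝔤_{>0}` is the span of the root vectors of positive height.  If `P` is
an ad-invariant polynomial function on `𝔤` (written as `Q` in the Killing-form coordinates
`φ`) and `Y ∈ 𝔤_{>0}`, then the gradient `∇_Y P` of `P` at `Y` with respect to the Killing
form lies in `𝔤_{≥0}`; equivalently, `⟨∇_Y P, Z⟩ = d_Y P(Z) = 0` for every `Z ∈ 𝔤_{>0}`.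
The directional derivative `d_Y P(Z)` is encoded polynomially: it is the coefficient of `t`
in the one-variable polynomial `S` with `S(t) = P(Y + t Z)`. -/
theorem stmt8
    {g : Type} [LieRing g] [LieAlgebra ℂ g] [FiniteDimensional ℂ g]
    [LieAlgebra.IsSimple ℂ g]
    (ℓ : ℕ) (Φ : Type) [Fintype Φ] [DecidableEq Φ]
    (ht : Φ → ℤ) (negr : Φ → Φ)
    (hnegr : ∀ γ, ht (negr γ) = -ht γ)
    (hht : ∀ γ, ht γ ≠ 0)
    (e : Φ → g) (hc : Fin ℓ → g)
    (b : Module.Basis (Fin ℓ ⊕ Φ) ℂ g) (hb : ∀ s, b s = Sum.elim hc e s)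
    (φ : g →ₗ[ℂ] (Fin ℓ ⊕ Φ → ℂ))
    (hφ : ∀ (x : g) (s : Fin ℓ ⊕ Φ),
      φ x s = Sum.elim (fun i => killingForm ℂ g (hc i) x)
        (fun γ => killingForm ℂ g (e (negr γ)) x) s)
    (hφbij : Function.Bijective φ)
    (h₀ : g)
    (hh₀e : ∀ γ, ⁅h₀, e γ⁆ = (ht γ : ℂ) • e γ)
    (hh₀h : ∀ i, ⁅h₀, hc i⁆ = 0)
    (P : g → ℂ) (Q : MvPolynomial (Fin ℓ ⊕ Φ) ℂ)
    (hP : ∀ x, P x = MvPolynomial.eval (φ x) Q)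
    (hinv : ∀ x y : g,
      ∑ s : Fin ℓ ⊕ Φ,
        MvPolynomial.eval (φ x) (MvPolynomial.pderiv s Q) * φ ⁅y, x⁆ s = 0)
    (Y : g) (hY : Y ∈ Submodule.span ℂ (e '' {γ | 0 < ht γ})) :
    ∀ Z ∈ Submodule.span ℂ (e '' {γ | 0 < ht γ}),
      ∀ S : Polynomial ℂ, (∀ t : ℂ, P (Y + t • Z) = S.eval t) → S.coeff 1 = 0 :=
  stmt8_general ℓ Φ ht e φ h₀ hh₀e P Q hP hinv Y hY

end PeriodicFullKostantToda
end
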